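/- arXiv:1811.07101 — 3 statements merged into one kernel-verified Lean document; each statement's English description precedes it below -/
import Mathlib

section
/- For every real number b > -1, every a ∈ [0,1), every natural number m ≥ 1 and every t₀ > 0, the iterated integral ∫₀^{t₀} dt₁ ∫₀^{t₁} dt₂ ⋯ ∫₀^{t_{m-1}} dt_m · t_m^b · ∏_{j=0}^{m-1} (t_j − t_{j+1})^{−a} equals t₀^{b + m(1−a)} · Γ(1−a)^m · Γ(1+b) / Γ(1 + b + m(1−a)). -/
/-! Each integration step is a scaled Beta integral
`∫₀ᵗ s^(u-1) (t-s)^(v-1) ds = t^(u+v-1) Γ(u) Γ(v) / Γ(u+v)` with `v = 1 - a`, so by induction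
`iterInt a b n t = Γ(1-a)^n Γ(1+b) / Γ(1+b+n(1-a)) · t^(b+n(1-a))` for `t > 0`; in the induction
step the `Γ(u)` produced by the Beta integral cancels the denominator of the previous constant. -/

open MeasureTheory Real

/-- Iterated convolution-type integral: `iterInt a b 0 t = t ^ b` and
`iterInt a b (n+1) t = ∫₀ᵗ (t - s)^(-a) * iterInt a b n s ds`. -/
noncomputable def iterInt (a b : ℝ) : ℕ → ℝ → ℝ
  | 0, t => t ^ b
  | (n + 1), t => ∫ s in (0:ℝ)..t, (t - s) ^ (-a) * iterInt a b n s

theorem integral_rpow_mul_sub_rpow {u v t : ℝ} (hu : 0 < u) (hv : 0 < v) (ht : 0 < t) :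
    ∫ x in (0:ℝ)..t, x ^ (u - 1) * (t - x) ^ (v - 1) =
      t ^ (u + v - 1) * (Gamma u * Gamma v / Gamma (u + v)) := by
  apply Complex.ofReal_injective
  have hcongr : Set.EqOn (fun x : ℝ => ((x ^ (u - 1) * (t - x) ^ (v - 1) : ℝ) : ℂ))
      (fun x : ℝ => (x : ℂ) ^ ((u : ℂ) - 1) * ((t : ℂ) - x) ^ ((v : ℂ) - 1)) (Set.uIcc 0 t) := by
    intro x hx
    rw [Set.uIcc_of_le ht.le] at hx
    simp only [Complex.ofReal_mul, Complex.ofReal_cpow hx.1,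
      Complex.ofReal_cpow (sub_nonneg.2 hx.2), Complex.ofReal_sub, Complex.ofReal_one]
  rw [← intervalIntegral.integral_ofReal, intervalIntegral.integral_congr hcongr,
    Complex.betaIntegral_scaled _ _ ht,
    Complex.betaIntegral_eq_Gamma_mul_div _ _ (by simpa) (by simpa)]
  push_cast [Complex.ofReal_cpow ht.le, ← Complex.Gamma_ofReal]
  rfl

theorem iterInt_eq_of_pos {a b : ℝ} (hb : -1 < b) (ha : a < 1) (n : ℕ) {t : ℝ} (ht : 0 < t) :
    iterInt a b n t =
      t ^ (b + (n : ℝ) * (1 - a)) * Gamma (1 - a) ^ n * Gamma (1 + b) /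
        Gamma (1 + b + (n : ℝ) * (1 - a)) := by
  induction n generalizing t with
  | zero =>
    have : Gamma (1 + b) ≠ 0 := (Gamma_pos_of_pos (by linarith)).ne'
    simp [iterInt, this]
  | succ n ih =>
    have hu : 0 < 1 + b + n * (1 - a) := by
      have : 0 ≤ (n : ℝ) * (1 - a) := mul_nonneg n.cast_nonneg (by linarith)
      linarith
    have hintegrand : ∀ s ∈ Set.uIoc 0 t, (t - s) ^ (-a) * iterInt a b n s =
        Gamma (1 - a) ^ n * Gamma (1 + b) / Gamma (1 + b + n * (1 - a)) *
          (s ^ ((1 + b + n * (1 - a)) - 1) * (t - s) ^ ((1 - a) - 1)) := by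
      rintro s ⟨hs, -⟩
      rw [ih (by simpa [ht.le] using hs), sub_sub_cancel_left,
        show 1 + b + n * (1 - a) - 1 = b + n * (1 - a) by ring]
      ring
    have hGamma : Gamma (1 + b + n * (1 - a)) ≠ 0 := (Gamma_pos_of_pos hu).ne'
    rw [iterInt, intervalIntegral.integral_congr_ae (ae_of_all _ hintegrand),
      intervalIntegral.integral_const_mul, integral_rpow_mul_sub_rpow hu (by linarith) ht,
      show 1 + b + n * (1 - a) + (1 - a) - 1 = b + ((n + 1 : ℕ) : ℝ) * (1 - a) by push_cast; ring,
      show 1 + b + n * (1 - a) + (1 - a) = 1 + b + ((n + 1 : ℕ) : ℝ) * (1 - a) by push_cast; ring,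
      pow_succ]
    -- `field_simp` would rewrite `n * (1 - a)` inside this Gamma value and lose `hGamma`
    generalize Gamma (1 + b + n * (1 - a)) = G at hGamma ⊢
    field_simp

theorem stmt0_general (a b : ℝ) (hb : -1 < b) (ha1 : a < 1)
    (m : ℕ) (t₀ : ℝ) (ht₀ : 0 < t₀) :
    iterInt a b m t₀ =
      t₀ ^ (b + (m : ℝ) * (1 - a)) * (Real.Gamma (1 - a)) ^ m * Real.Gamma (1 + b) /
        Real.Gamma (1 + b + (m : ℝ) * (1 - a)) :=
  iterInt_eq_of_pos hb ha1 m ht₀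

theorem stmt0 (a b : ℝ) (hb : -1 < b) (ha0 : 0 ≤ a) (ha1 : a < 1)
    (m : ℕ) (hm : 1 ≤ m) (t₀ : ℝ) (ht₀ : 0 < t₀) :
    iterInt a b m t₀ =
      t₀ ^ (b + (m : ℝ) * (1 - a)) * (Real.Gamma (1 - a)) ^ m * Real.Gamma (1 + b) /
        Real.Gamma (1 + b + (m : ℝ) * (1 - a)) :=
  stmt0_general a b hb ha1 m t₀ ht₀
end

section
/- Let d ≥ 1, and suppose the density q(0,x;s,·) of a random vector Y_s satisfies the Gaussian upper bound q(0,x;s,z) ≤ Ĉ g_{ĉs}(x,z) for all z, where Ĉ, ĉ > 0 and g_{cr}(x,y) = (2πcr)^{−d/2} exp(−|y−x|²/(2cr)). Then for every c > 0, p > 1, 0 ≤ s < t and x, y ∈ ℝ^d: (∫_{ℝ^d} q(0,x;s,z) g_{c(t−s)}(z,y)^p dz)^{1/p} ≤ (Ĉ^{1/p} / c^{d(p−1)/(2p)}) · ((p(c∨ĉ))^{d/2} / (c∧ĉ)^{d/(2p)}) · (t/(t−s))^{d(p−1)/(2p)} · g_{p(c∨ĉ)t}(x,y). -/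
open MeasureTheory Real

/-- Gaussian kernel with variance parameter `v` on `ℝ^d`. -/
noncomputable def gaussK (d : ℕ) (v : ℝ) (x y : EuclideanSpace ℝ (Fin d)) : ℝ :=
  (2 * Real.pi * v) ^ (-(d : ℝ) / 2) * Real.exp (-‖y - x‖ ^ 2 / (2 * v))

/-!
Bounding `q` by `Ĉ g_{ĉs}(x, ·)` and writing `g_{c(t-s)}^p` as a multiple of `g_{c(t-s)/p}`, the
integral is at most a constant times `∫ g_{ĉs}(x, z) g_{c(t-s)/p}(z, y) dz = g_{ĉs + c(t-s)/p}(x, y)`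
(Chapman–Kolmogorov). The variance `ĉs + c(t-s)/p` lies between `(c ∧ ĉ) t / p` and `(c ∨ ĉ) t`, so
monotonicity in the variance replaces it by `(c ∨ ĉ) t` at the cost of `(p (c ∨ ĉ) / (c ∧ ĉ))^{d/2}`,
and the power identity turns `g_{(c ∨ ĉ) t}` into a multiple of `g_{p (c ∨ ĉ) t}^p`. For `s = 0` the
hypothesis forces `q = 0`.
-/

section

variable {d : ℕ}

theorem integral_gaussK {v : ℝ} (hv : 0 < v) (m : EuclideanSpace ℝ (Fin d)) :
    ∫ z, gaussK d v m z = 1 := by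
  have hexp : ∫ z : EuclideanSpace ℝ (Fin d), rexp (-(1 / (2 * v)) * ‖z‖ ^ 2) =
      (2 * π * v) ^ ((d : ℝ) / 2) := by
    rw [GaussianFourier.integral_rexp_neg_mul_sq_norm (by positivity), finrank_euclideanSpace_fin]
    congr 1
    field_simp
  simp_rw [gaussK, integral_const_mul]
  rw [integral_sub_right_eq_self (fun z ↦ rexp (-‖z‖ ^ 2 / (2 * v))) m]
  simp_rw [neg_div, div_eq_inv_mul, ← neg_mul, ← one_div]
  rw [hexp, ← rpow_add (by positivity)]
  ring_nf
  exact rpow_zero _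

theorem integrable_gaussK {v : ℝ} (hv : 0 < v) (m : EuclideanSpace ℝ (Fin d)) :
    Integrable (gaussK d v m) :=
  .of_integral_ne_zero (by rw [integral_gaussK hv]; exact one_ne_zero)

theorem gaussK_nonneg {v : ℝ} (hv : 0 ≤ v) (x y : EuclideanSpace ℝ (Fin d)) :
    0 ≤ gaussK d v x y := by
  unfold gaussK; positivity

-- `0 ^ (-d/2) = 0` for `d ≠ 0`, so the degenerate kernel vanishes identically.
theorem gaussK_zero (hd : d ≠ 0) (x y : EuclideanSpace ℝ (Fin d)) : gaussK d 0 x y = 0 := by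
  have : -(d : ℝ) / 2 ≠ 0 := by simp [hd]
  simp [gaussK, zero_rpow this]

theorem gaussK_mul_gaussK {a b : ℝ} (ha : 0 < a) (hb : 0 < b) (x y z : EuclideanSpace ℝ (Fin d)) :
    gaussK d a x z * gaussK d b z y =
      gaussK d (a + b) x y * gaussK d (a * b / (a + b)) (x + (a / (a + b)) • (y - x)) z := by
  have hab : 0 < a + b := by linarith
  have hprefactor : (2 * π * a) ^ (-(d : ℝ) / 2) * (2 * π * b) ^ (-(d : ℝ) / 2) =
      (2 * π * (a + b)) ^ (-(d : ℝ) / 2) * (2 * π * (a * b / (a + b))) ^ (-(d : ℝ) / 2) := by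
    rw [← mul_rpow (by positivity) (by positivity), ← mul_rpow (by positivity) (by positivity)]
    congr 1
    field_simp
  have hexponent : -‖z - x‖ ^ 2 / (2 * a) + -‖y - z‖ ^ 2 / (2 * b) =
      -‖y - x‖ ^ 2 / (2 * (a + b)) +
        -‖z - (x + (a / (a + b)) • (y - x))‖ ^ 2 / (2 * (a * b / (a + b))) := by
    have h1 : y - z = (y - x) - (z - x) := by abel
    have h2 : z - (x + (a / (a + b)) • (y - x)) = (z - x) - (a / (a + b)) • (y - x) := by abel
    rw [h1, h2]
    generalize z - x = u
    generalize y - x = e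
    rw [norm_sub_sq_real, norm_sub_sq_real, real_inner_smul_right, norm_smul,
      mul_pow, Real.norm_eq_abs, sq_abs, real_inner_comm]
    field_simp
    ring
  simp only [gaussK]
  rw [mul_mul_mul_comm, hprefactor, ← exp_add, hexponent, exp_add, mul_mul_mul_comm]

theorem integrable_gaussK_mul_gaussK {a b : ℝ} (ha : 0 < a) (hb : 0 < b)
    (x y : EuclideanSpace ℝ (Fin d)) :
    Integrable (fun z ↦ gaussK d a x z * gaussK d b z y) := by
  simp_rw [gaussK_mul_gaussK ha hb x y]
  exact (integrable_gaussK (by positivity) _).const_mul _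

theorem integral_gaussK_mul_gaussK {a b : ℝ} (ha : 0 < a) (hb : 0 < b)
    (x y : EuclideanSpace ℝ (Fin d)) :
    ∫ z, gaussK d a x z * gaussK d b z y = gaussK d (a + b) x y := by
  simp_rw [gaussK_mul_gaussK ha hb x y]
  rw [integral_const_mul, integral_gaussK (by positivity), mul_one]

theorem gaussK_rpow {v p : ℝ} (hv : 0 < v) (hp : 0 < p) (x y : EuclideanSpace ℝ (Fin d)) :
    gaussK d v x y ^ p =
      p ^ (-(d : ℝ) / 2) * (2 * π * v) ^ (-(d : ℝ) * (p - 1) / 2) * gaussK d (v / p) x y := by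
  have hA : 0 < 2 * π * v := by positivity
  have hexp : rexp (-‖y - x‖ ^ 2 / (2 * v)) ^ p = rexp (-‖y - x‖ ^ 2 / (2 * (v / p))) := by
    rw [← exp_mul]
    congr 1
    field_simp
  have hprefactor : ((2 * π * v) ^ (-(d : ℝ) / 2)) ^ p =
      p ^ (-(d : ℝ) / 2) * (2 * π * v) ^ (-(d : ℝ) * (p - 1) / 2) *
        (2 * π * (v / p)) ^ (-(d : ℝ) / 2) := by
    have hsplit : (2 * π * v) ^ (-(d : ℝ) / 2 * p) =
        (2 * π * v) ^ (-(d : ℝ) * (p - 1) / 2) * (2 * π * v) ^ (-(d : ℝ) / 2) := by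
      rw [← rpow_add hA]
      ring_nf
    rw [← rpow_mul hA.le, hsplit, show 2 * π * (v / p) = (2 * π * v) / p by ring,
      div_rpow hA.le hp.le]
    field_simp
  simp only [gaussK]
  rw [mul_rpow (by positivity) (exp_nonneg _), hexp, hprefactor, mul_assoc]

theorem gaussK_le_of_le {v V : ℝ} (hv : 0 < v) (hvV : v ≤ V) (x y : EuclideanSpace ℝ (Fin d)) :
    gaussK d v x y ≤ (V / v) ^ ((d : ℝ) / 2) * gaussK d V x y := by
  have hV : 0 < V := hv.trans_le hvV
  have hprefactor : (V / v) ^ ((d : ℝ) / 2) * (2 * π * V) ^ (-(d : ℝ) / 2) =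
      (2 * π * v) ^ (-(d : ℝ) / 2) := by
    rw [show V / v = (2 * π * V) / (2 * π * v) by field_simp, div_rpow (by positivity)
      (by positivity), neg_div, rpow_neg (by positivity), rpow_neg (by positivity)]
    field_simp
  simp only [gaussK]
  rw [← mul_assoc, hprefactor]
  simp only [neg_div]
  gcongr

theorem integral_mul_gaussK_rpow_le {C a b p : ℝ} (ha : 0 < a) (hb : 0 < b) (hp : 0 < p)
    {x y : EuclideanSpace ℝ (Fin d)} {q : EuclideanSpace ℝ (Fin d) → ℝ} (hq0 : ∀ z, 0 ≤ q z)
    (hqb : ∀ z, q z ≤ C * gaussK d a x z) :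
    ∫ z, q z * gaussK d b z y ^ p ≤
      C * (p ^ (-(d : ℝ) / 2) * (2 * π * b) ^ (-(d : ℝ) * (p - 1) / 2)) *
        gaussK d (a + b / p) x y := by
  set K := p ^ (-(d : ℝ) / 2) * (2 * π * b) ^ (-(d : ℝ) * (p - 1) / 2)
  have hpointwise (z) : q z * gaussK d b z y ^ p ≤
      C * K * (gaussK d a x z * gaussK d (b / p) z y) := by
    calc q z * gaussK d b z y ^ p ≤ C * gaussK d a x z * gaussK d b z y ^ p := by
          gcongr
          · exact rpow_nonneg (gaussK_nonneg hb.le _ _) _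
          · exact hqb z
      _ = C * K * (gaussK d a x z * gaussK d (b / p) z y) := by
          rw [gaussK_rpow hb hp]; ring
  calc ∫ z, q z * gaussK d b z y ^ p
      ≤ ∫ z, C * K * (gaussK d a x z * gaussK d (b / p) z y) :=
        integral_mono_of_nonneg
          (.of_forall fun z ↦ mul_nonneg (hq0 z) (rpow_nonneg (gaussK_nonneg hb.le _ _) _))
          ((integrable_gaussK_mul_gaussK ha (by positivity) x y).const_mul _)
          (.of_forall hpointwise)
    _ = C * K * gaussK d (a + b / p) x y := by
        rw [integral_const_mul, integral_gaussK_mul_gaussK ha (by positivity)]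

theorem variance_mem_Icc {c ĉ s t p : ℝ} (hc : 0 ≤ c) (hĉ : 0 ≤ ĉ) (hs : 0 ≤ s) (hst : s ≤ t)
    (hp : 1 ≤ p) :
    ĉ * s + c * (t - s) / p ∈ Set.Icc (min c ĉ * t / p) (max c ĉ * t) := by
  have hp0 : 0 < p := by linarith
  have hmin : 0 ≤ min c ĉ := le_min hc hĉ
  constructor
  · rw [div_le_iff₀ hp0, add_mul, div_mul_cancel₀ _ hp0.ne']
    nlinarith [mul_le_mul_of_nonneg_right (min_le_right c ĉ) hs,
      mul_le_mul_of_nonneg_right (min_le_left c ĉ) (sub_nonneg.2 hst),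
      mul_le_mul_of_nonneg_left hp (mul_nonneg hĉ hs)]
  · have : c * (t - s) / p ≤ c * (t - s) := div_le_self (by nlinarith) hp
    nlinarith [le_max_left c ĉ, le_max_right c ĉ]

theorem gaussK_variance_le {c ĉ s t p : ℝ} (hc : 0 < c) (hĉ : 0 < ĉ) (hs : 0 ≤ s) (hst : s < t)
    (hp : 1 ≤ p) (x y : EuclideanSpace ℝ (Fin d)) :
    gaussK d (ĉ * s + c * (t - s) / p) x y ≤
      (p * max c ĉ / min c ĉ) ^ ((d : ℝ) / 2) * gaussK d (max c ĉ * t) x y := by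
  have hp0 : 0 < p := by linarith
  have ht : 0 < t := hs.trans_lt hst
  have hm : 0 < min c ĉ := lt_min hc hĉ
  have hu : 0 < max c ĉ := lt_max_of_lt_left hc
  have hw : 0 < min c ĉ * t / p := by positivity
  obtain ⟨hlower, hupper⟩ := variance_mem_Icc hc.le hĉ.le hs hst.le hp
  calc gaussK d (ĉ * s + c * (t - s) / p) x y
      ≤ (max c ĉ * t / (ĉ * s + c * (t - s) / p)) ^ ((d : ℝ) / 2) * gaussK d (max c ĉ * t) x y :=
        gaussK_le_of_le (hw.trans_le hlower) hupper x y
    _ ≤ (max c ĉ * t / (min c ĉ * t / p)) ^ ((d : ℝ) / 2) * gaussK d (max c ĉ * t) x y := by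
        gcongr
        exact gaussK_nonneg (by positivity) x y
    _ = (p * max c ĉ / min c ĉ) ^ ((d : ℝ) / 2) * gaussK d (max c ĉ * t) x y := by
        congr 2
        field_simp

theorem bound_constant_rpow {D C c p u m t τ : ℝ} (hC : 0 < C) (hc : 0 < c) (hp : 0 < p)
    (hu : 0 < u) (hm : 0 < m) (ht : 0 < t) (hτ : 0 < τ) :
    C * (p ^ (-D / 2) * (2 * π * (c * τ)) ^ (-D * (p - 1) / 2)) * (p * u / m) ^ (D / 2) /
        (p ^ (-D / 2) * (2 * π * (p * u * t)) ^ (-D * (p - 1) / 2)) =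
      ((C ^ (1 / p) / c ^ (D * (p - 1) / (2 * p))) * ((p * u) ^ (D / 2) / m ^ (D / (2 * p))) *
        (t / τ) ^ (D * (p - 1) / (2 * p))) ^ p := by
  rw [← exp_log (by positivity : 0 < C * (p ^ (-D / 2) * (2 * π * (c * τ)) ^ (-D * (p - 1) / 2))
      * (p * u / m) ^ (D / 2) / (p ^ (-D / 2) * (2 * π * (p * u * t)) ^ (-D * (p - 1) / 2))),
    ← exp_log (by positivity : 0 < ((C ^ (1 / p) / c ^ (D * (p - 1) / (2 * p))) *
      ((p * u) ^ (D / 2) / m ^ (D / (2 * p))) * (t / τ) ^ (D * (p - 1) / (2 * p))) ^ p)]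
  congr 1
  simp (disch := positivity) only [log_mul, log_div, log_rpow]
  field_simp
  ring

end

theorem stmt15_general (d : ℕ) (hd : 1 ≤ d) (Chat cHat c p s t : ℝ)
    (hChat : 0 < Chat) (hcHat : 0 < cHat) (hc : 0 < c) (hp : 1 < p) (hs : 0 ≤ s) (hst : s < t)
    (x y : EuclideanSpace ℝ (Fin d))
    (q : EuclideanSpace ℝ (Fin d) → ℝ) (hq0 : ∀ z, 0 ≤ q z)
    (hqb : ∀ z, q z ≤ Chat * gaussK d (cHat * s) x z) :
    (∫ z, q z * gaussK d (c * (t - s)) z y ^ p) ^ (1 / p) ≤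
      (Chat ^ (1 / p) / c ^ ((d : ℝ) * (p - 1) / (2 * p))) *
        ((p * max c cHat) ^ ((d : ℝ) / 2) / (min c cHat) ^ ((d : ℝ) / (2 * p))) *
        (t / (t - s)) ^ ((d : ℝ) * (p - 1) / (2 * p)) *
        gaussK d (p * max c cHat * t) x y := by
  have hp0 : 0 < p := by linarith
  have ht : 0 < t := hs.trans_lt hst
  have hτ : 0 < t - s := by linarith
  have hu : 0 < max c cHat := lt_max_of_lt_left hc
  have hI0 : 0 ≤ ∫ z, q z * gaussK d (c * (t - s)) z y ^ p :=
    integral_nonneg fun z ↦ mul_nonneg (hq0 z) (rpow_nonneg (gaussK_nonneg (by positivity) _ _) _)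
  have hG : 0 ≤ gaussK d (p * max c cHat * t) x y := gaussK_nonneg (by positivity) x y
  rw [← rpow_le_rpow_iff (z := p) (rpow_nonneg hI0 _) (by positivity) hp0, ← rpow_mul hI0,
    one_div_mul_cancel hp0.ne', rpow_one]
  rcases hs.eq_or_lt with rfl | hs0
  · have hq : ∀ z, q z = 0 := fun z ↦ le_antisymm
      (by simpa [gaussK_zero (by omega : d ≠ 0)] using hqb z) (hq0 z)
    simp only [hq, zero_mul, integral_zero]
    positivity
  have hpow := gaussK_rpow (by positivity : 0 < p * max c cHat * t) hp0 x y
  rw [show p * max c cHat * t / p = max c cHat * t by field_simp] at hpow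
  calc ∫ z, q z * gaussK d (c * (t - s)) z y ^ p
      ≤ Chat * (p ^ (-(d : ℝ) / 2) * (2 * π * (c * (t - s))) ^ (-(d : ℝ) * (p - 1) / 2)) *
          gaussK d (cHat * s + c * (t - s) / p) x y :=
        integral_mul_gaussK_rpow_le (by positivity) (by positivity) hp0 hq0 hqb
    _ ≤ Chat * (p ^ (-(d : ℝ) / 2) * (2 * π * (c * (t - s))) ^ (-(d : ℝ) * (p - 1) / 2)) *
          ((p * max c cHat / min c cHat) ^ ((d : ℝ) / 2) * gaussK d (max c cHat * t) x y) := by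
        gcongr
        exact gaussK_variance_le hc hcHat hs hst hp.le x y
    _ = _ := by
        rw [mul_rpow (by positivity) hG, hpow,
          ← bound_constant_rpow hChat hc hp0 hu (lt_min hc hcHat) ht hτ]
        field_simp

theorem stmt15 (d : ℕ) (hd : 1 ≤ d) (Chat cHat c p s t : ℝ)
    (hChat : 0 < Chat) (hcHat : 0 < cHat) (hc : 0 < c) (hp : 1 < p) (hs : 0 ≤ s) (hst : s < t)
    (x y : EuclideanSpace ℝ (Fin d))
    (q : EuclideanSpace ℝ (Fin d) → ℝ) (hqm : Measurable q) (hq0 : ∀ z, 0 ≤ q z)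
    (hqb : ∀ z, q z ≤ Chat * gaussK d (cHat * s) x z) :
    (∫ z, q z * gaussK d (c * (t - s)) z y ^ p) ^ (1 / p) ≤
      (Chat ^ (1 / p) / c ^ ((d : ℝ) * (p - 1) / (2 * p))) *
        ((p * max c cHat) ^ ((d : ℝ) / 2) / (min c cHat) ^ ((d : ℝ) / (2 * p))) *
        (t / (t - s)) ^ ((d : ℝ) * (p - 1) / (2 * p)) *
        gaussK d (p * max c cHat * t) x y :=
  stmt15_general d hd Chat cHat c p s t hChat hcHat hc hp hs hst x y q hq0 hqb
end

section
/- Let λ, μ, ξ > 0 and define b(x) := λx(μ − |x|) and σ(x) := ξ|x|^{3/2} for x ∈ ℝ. Then: (i) for every p₀ ≤ (2λ + ξ²)/ξ² and all x ∈ ℝ, 2x·b(x) + (p₀ − 1)σ(x)² ≤ 2λμ(1 + x²); (ii) for every p₁ ≤ (λ + ξ²)/ξ² and all x, y ∈ ℝ, 2(x−y)(b(x) − b(y)) + (p₁ − 1)|σ(x) − σ(y)|² ≤ 2λμ|x − y|²; (iii) for all x, y ∈ ℝ, |b(x) − b(y)| ≤ λ·max(μ,1)·(1 + |x| + |y|)|x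 − y|. -/
lemma rpow32_eq (a : ℝ) (ha : 0 ≤ a) : a ^ ((3:ℝ)/2) = (Real.sqrt a) ^ 3 := by
  rw [show ((3:ℝ)/2) = (1/2) * 3 by ring, Real.rpow_mul ha, ← Real.sqrt_eq_rpow]
  rw [show ((3:ℝ) : ℝ) = ((3:ℕ) : ℝ) by norm_num, Real.rpow_natCast]

lemma abs_mul_abs_sub (x y : ℝ) : abs (x * |x| - y * |y|) ≤ (|x| + |y|) * |x - y| := by
  have h1 : x * |x| - y * |y| = (x - y) * |x| + y * (|x| - |y|) := by ring
  rw [h1]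
  calc abs ((x - y) * |x| + y * (|x| - |y|)) ≤ abs ((x - y) * |x|) + abs (y * (|x| - |y|)) :=
        abs_add_le _ _
    _ = |x - y| * |x| + |y| * abs (|x| - |y|) := by rw [abs_mul, abs_mul, abs_abs]
    _ ≤ |x - y| * |x| + |y| * |x - y| := by
        have := abs_abs_sub_abs_le_abs_sub x y
        nlinarith [abs_nonneg y]
    _ = (|x| + |y|) * |x - y| := by ring

theorem stmt19 (lam μ ξ : ℝ) (hlam : 0 < lam) (hμ : 0 < μ) (hξ : 0 < ξ) :
    (∀ p₀ : ℝ, p₀ ≤ (2 * lam + ξ ^ 2) / ξ ^ 2 → ∀ x : ℝ,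
      2 * x * (lam * x * (μ - |x|)) + (p₀ - 1) * (ξ * |x| ^ ((3:ℝ)/2)) ^ 2 ≤
        2 * lam * μ * (1 + x ^ 2)) ∧
    (∀ p₁ : ℝ, p₁ ≤ (lam + ξ ^ 2) / ξ ^ 2 → ∀ x y : ℝ,
      2 * (x - y) * (lam * x * (μ - |x|) - lam * y * (μ - |y|)) +
          (p₁ - 1) * (ξ * |x| ^ ((3:ℝ)/2) - ξ * |y| ^ ((3:ℝ)/2)) ^ 2 ≤
        2 * lam * μ * (x - y) ^ 2) ∧
    (∀ x y : ℝ,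
      |lam * x * (μ - |x|) - lam * y * (μ - |y|)| ≤
        lam * max μ 1 * (1 + |x| + |y|) * |x - y|) := by
  have hξ2 : (0:ℝ) < ξ ^ 2 := by positivity
  refine ⟨?_, ?_, ?_⟩
  · intro p₀ hp₀ x
    have h : (p₀ - 1) * ξ ^ 2 ≤ 2 * lam := by
      have := (le_div_iff₀ hξ2).mp hp₀
      nlinarith
    set s := Real.sqrt |x| with hs
    have hs0 : 0 ≤ s := Real.sqrt_nonneg _
    have hs2 : s ^ 2 = |x| := Real.sq_sqrt (abs_nonneg x)
    have hx2 : x ^ 2 = s ^ 4 := by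
      have : x ^ 2 = |x| ^ 2 := (sq_abs x).symm
      rw [this, ← hs2]; ring
    rw [rpow32_eq |x| (abs_nonneg x), ← hs2, Real.sqrt_sq hs0]
    have hx2l : lam * x ^ 2 = lam * s ^ 4 := by rw [hx2]
    nlinarith [mul_le_mul_of_nonneg_right h (pow_nonneg hs0 6), mul_pos hlam hμ,
      hx2l.le, hx2l.ge, sq_nonneg s]
  · intro p₁ hp₁ x y
    have h : (p₁ - 1) * ξ ^ 2 ≤ lam := by
      have := (le_div_iff₀ hξ2).mp hp₁
      nlinarith
    set s := Real.sqrt |x| with hsdef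
    set t := Real.sqrt |y| with htdef
    have hs0 : 0 ≤ s := Real.sqrt_nonneg _
    have ht0 : 0 ≤ t := Real.sqrt_nonneg _
    have hs2 : s ^ 2 = |x| := Real.sq_sqrt (abs_nonneg x)
    have ht2 : t ^ 2 = |y| := Real.sq_sqrt (abs_nonneg y)
    have hx2 : x ^ 2 = s ^ 4 := by
      have : x ^ 2 = |x| ^ 2 := (sq_abs x).symm
      rw [this, ← hs2]; ring
    have hy2 : y ^ 2 = t ^ 4 := by
      have : y ^ 2 = |y| ^ 2 := (sq_abs y).symm
      rw [this, ← ht2]; ring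
    have hxy : x * y ≤ s ^ 2 * t ^ 2 := by
      rw [hs2, ht2, ← abs_mul]; exact le_abs_self _
    rw [rpow32_eq |x| (abs_nonneg x), rpow32_eq |y| (abs_nonneg y), ← hsdef, ← htdef,
      ← hs2, ← ht2]
    -- Step 1: bound the (p₁-1) term by (lam/ξ²)·term
    have hterm : (0:ℝ) ≤ (ξ * s ^ 3 - ξ * t ^ 3) ^ 2 := sq_nonneg _
    have hstep : (p₁ - 1) * (ξ * s ^ 3 - ξ * t ^ 3) ^ 2 ≤ lam * (s ^ 3 - t ^ 3) ^ 2 := by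
      have h2 : (ξ * s ^ 3 - ξ * t ^ 3) ^ 2 = ξ ^ 2 * (s ^ 3 - t ^ 3) ^ 2 := by ring
      have h3 : (p₁ - 1) * ξ ^ 2 * (s ^ 3 - t ^ 3) ^ 2 ≤ lam * (s ^ 3 - t ^ 3) ^ 2 :=
        mul_le_mul_of_nonneg_right h (sq_nonneg _)
      nlinarith [h3]
    -- Key polynomial inequality
    have key : 0 ≤ (s - t) ^ 2 * (s ^ 4 + 2 * s ^ 3 * t + s ^ 2 * t ^ 2 + 2 * s * t ^ 3 + t ^ 4) := by
      positivity
    have hmix : 0 ≤ (s ^ 2 + t ^ 2) * (s ^ 2 * t ^ 2 - x * y) := by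
      have : 0 ≤ s ^ 2 + t ^ 2 := by positivity
      nlinarith [this]
    have hx2s : x ^ 2 * s ^ 2 = s ^ 6 := by rw [hx2]; ring
    have hy2t : y ^ 2 * t ^ 2 = t ^ 6 := by rw [hy2]; ring
    have inner : (s ^ 3 - t ^ 3) ^ 2 ≤ 2 * (x - y) * (x * s ^ 2 - y * t ^ 2) := by
      linarith [key, hmix, hx2s.le, hx2s.ge, hy2t.le, hy2t.ge]
    have innerl := mul_le_mul_of_nonneg_left inner hlam.le
    linarith [hstep, innerl]
  · intro x y
    have hM1 : (1:ℝ) ≤ max μ 1 := le_max_right _ _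
    have hMμ : μ ≤ max μ 1 := le_max_left _ _
    have h1 : abs (x * |x| - y * |y|) ≤ (|x| + |y|) * |x - y| := abs_mul_abs_sub x y
    have heq : lam * x * (μ - |x|) - lam * y * (μ - |y|)
        = lam * (μ * (x - y) - (x * |x| - y * |y|)) := by ring
    rw [heq, abs_mul, abs_of_pos hlam]
    have h2 : abs (μ * (x - y) - (x * |x| - y * |y|)) ≤ μ * |x - y| + (|x| + |y|) * |x - y| := by
      calc abs (μ * (x - y) - (x * |x| - y * |y|))
          ≤ abs (μ * (x - y)) + abs (x * |x| - y * |y|) := abs_sub _ _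
        _ = μ * |x - y| + abs (x * |x| - y * |y|) := by rw [abs_mul, abs_of_pos hμ]
        _ ≤ μ * |x - y| + (|x| + |y|) * |x - y| := by linarith
    have h3 : μ * |x - y| + (|x| + |y|) * |x - y| ≤ max μ 1 * (1 + |x| + |y|) * |x - y| := by
      nlinarith [abs_nonneg (x - y), abs_nonneg x, abs_nonneg y,
        mul_le_mul_of_nonneg_right hMμ (abs_nonneg (x - y)),
        mul_nonneg (mul_nonneg (sub_nonneg.mpr hM1)
          (add_nonneg (abs_nonneg x) (abs_nonneg y))) (abs_nonneg (x - y))]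
    calc lam * abs (μ * (x - y) - (x * |x| - y * |y|))
        ≤ lam * (max μ 1 * (1 + |x| + |y|) * |x - y|) :=
          mul_le_mul_of_nonneg_left (h2.trans h3) hlam.le
      _ = lam * max μ 1 * (1 + |x| + |y|) * |x - y| := by ring
end
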